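/- Let λ±(c, α, δ₀) = 1 + α·(2 + δ₀(c - 4δ₀ - 1) ± √((δ₀²-2)(c-f₋)(c-f₊)))/(δ₀(4δ₀ - c - 1)), with f±(δ₀) = (δ₀(4δ₀² - 7δ₀ + 2) ± 2√((2δ₀-3)(4δ₀³-8δ₀²+4δ₀-1)))/(δ₀²-2). Then for δ₀ > 3/2 (with δ₀ ≠ (2+√2)/2), the choice α = 2δ₀²/(2δ₀² + δ₀ - 1) satisfies λ₊(-1, α, δ₀) = -λ₋(-1, α, δ₀). -/

import Mathlib

noncomputable def fPlusC (δ₀ : ℝ) : ℝ :=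
  (δ₀ * (4 * δ₀ ^ 2 - 7 * δ₀ + 2) +
    2 * Real.sqrt ((2 * δ₀ - 3) * (4 * δ₀ ^ 3 - 8 * δ₀ ^ 2 + 4 * δ₀ - 1))) /
  (δ₀ ^ 2 - 2)

noncomputable def fMinusC (δ₀ : ℝ) : ℝ :=
  (δ₀ * (4 * δ₀ ^ 2 - 7 * δ₀ + 2) -
    2 * Real.sqrt ((2 * δ₀ - 3) * (4 * δ₀ ^ 3 - 8 * δ₀ ^ 2 + 4 * δ₀ - 1))) /
  (δ₀ ^ 2 - 2)

/-- Eigenvalue `λ₊` of the cell block-Jacobi two-level iteration operator. -/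
noncomputable def lambdaPlusC (c α δ₀ : ℝ) : ℝ :=
  1 + α * (2 + δ₀ * (c - 4 * δ₀ - 1) +
    Real.sqrt ((δ₀ ^ 2 - 2) * (c - fMinusC δ₀) * (c - fPlusC δ₀))) /
    (δ₀ * (4 * δ₀ - c - 1))

/-- Eigenvalue `λ₋`. -/
noncomputable def lambdaMinusC (c α δ₀ : ℝ) : ℝ :=
  1 + α * (2 + δ₀ * (c - 4 * δ₀ - 1) -
    Real.sqrt ((δ₀ ^ 2 - 2) * (c - fMinusC δ₀) * (c - fPlusC δ₀))) /
    (δ₀ * (4 * δ₀ - c - 1))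

/-! The square roots in `λ₊` and `λ₋` cancel in their sum, which at `c = -1` equals
`2 - α (2δ₀² + δ₀ - 1) / δ₀²`; the chosen `α` is exactly the one making this trace vanish. -/

theorem lambdaPlusC_add_lambdaMinusC (c α δ₀ : ℝ) :
    lambdaPlusC c α δ₀ + lambdaMinusC c α δ₀
      = 2 + 2 * α * (2 + δ₀ * (c - 4 * δ₀ - 1)) / (δ₀ * (4 * δ₀ - c - 1)) := by
  unfold lambdaPlusC lambdaMinusC
  ring

theorem lambdaPlusC_add_lambdaMinusC_neg_one (α δ₀ : ℝ) :
    lambdaPlusC (-1) α δ₀ + lambdaMinusC (-1) α δ₀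
      = 2 - α * (2 * δ₀ ^ 2 + δ₀ - 1) / δ₀ ^ 2 := by
  rw [lambdaPlusC_add_lambdaMinusC]
  ring

theorem stmt_15_general (δ₀ : ℝ) (h : 3 / 2 < δ₀) :
    lambdaPlusC (-1) (2 * δ₀ ^ 2 / (2 * δ₀ ^ 2 + δ₀ - 1)) δ₀
      = - lambdaMinusC (-1) (2 * δ₀ ^ 2 / (2 * δ₀ ^ 2 + δ₀ - 1)) δ₀ := by
  have hδ₀ : δ₀ ≠ 0 := by positivity
  have hq : 2 * δ₀ ^ 2 + δ₀ - 1 ≠ 0 := by nlinarith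
  refine eq_neg_of_add_eq_zero_left ?_
  rw [lambdaPlusC_add_lambdaMinusC_neg_one]
  rw [div_mul_cancel₀ _ hq, mul_div_assoc, div_self (pow_ne_zero 2 hδ₀)]
  norm_num

theorem stmt_15 (δ₀ : ℝ) (h : 3 / 2 < δ₀) (hne : δ₀ ≠ (2 + Real.sqrt 2) / 2) :
    lambdaPlusC (-1) (2 * δ₀ ^ 2 / (2 * δ₀ ^ 2 + δ₀ - 1)) δ₀
      = - lambdaMinusC (-1) (2 * δ₀ ^ 2 / (2 * δ₀ ^ 2 + δ₀ - 1)) δ₀ :=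
  stmt_15_general δ₀ h
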